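/- Let Ψ be the ℂ[x,t^{±1}]-endomorphism of ℂ[x,y,z,t^{±1},w] with Ψ(y) = -t⁻³(y+y²+wz) - (1/(4t⁶))(yz-xw)², Ψ(z) = z - (x/(2t³))(yz-xw), Ψ(w) = (1/(2t³))(yz-xw). Then Ψ(x²y+z²+x+t³) = (1 - xy·t⁻³)(xy+z²+x+t³). -/

import Mathlib

open MvPolynomial LaurentPolynomial

-- We work in ℂ[x,y,z,t^{±1},w] = (ℂ[t,t⁻¹])[x,y,z,w], with x = X 0, y = X 1,
-- z = X 2, w = X 3, and t = MvPolynomial.C (T 1).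

/-- The ℂ[x,t^{±1}]-algebra endomorphism Ψ. -/
noncomputable def PsiL :
    MvPolynomial (Fin 4) (LaurentPolynomial ℂ) →ₐ[LaurentPolynomial ℂ]
      MvPolynomial (Fin 4) (LaurentPolynomial ℂ) :=
  aeval ![X 0,
    -(MvPolynomial.C (T (-3))) * (X 1 + X 1 ^ 2 + X 3 * X 2) -
      MvPolynomial.C (LaurentPolynomial.C (1/4 : ℂ) * T (-6)) * (X 1 * X 2 - X 0 * X 3) ^ 2,
    X 2 - MvPolynomial.C (LaurentPolynomial.C (1/2 : ℂ) * T (-3)) * X 0 * (X 1 * X 2 - X 0 * X 3),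
    MvPolynomial.C (LaurentPolynomial.C (1/2 : ℂ) * T (-3)) * (X 1 * X 2 - X 0 * X 3)]

/- With `s = t⁻³`, `a = t³` and `c = 1/(2t³)`: the cross term `-2cxz(yz - xw)` of `Ψ(z)²` cancels
the `wz`-term of `x²Ψ(y)`, and `s * a = 1` turns `-xy·s·a` into the `-xy` needed on the right. -/
theorem koras_russell_substitution_identity {R : Type*} [CommRing R] {x y z w a s c : R}
    (hs : s * a = 1) (hc : 2 * c = s) :
    x ^ 2 * (-s * (y + y ^ 2 + w * z) - c ^ 2 * (y * z - x * w) ^ 2)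
        + (z - c * x * (y * z - x * w)) ^ 2 + x + a =
      (1 - x * y * s) * (x * y + z ^ 2 + x + a) := by
  linear_combination x * y * hs - x * z * (y * z - x * w) * hc

theorem LaurentPolynomial.T_neg_mul_T (n : ℤ) {R : Type*} [Semiring R] :
    (T (-n) * T n : R[T;T⁻¹]) = 1 := by
  rw [← T_add, neg_add_cancel, T_zero]

theorem two_mul_half_mul_T (n : ℤ) : 2 * (LaurentPolynomial.C (1/2 : ℂ) * T n) = T n := by
  rw [← mul_assoc, ← map_ofNat LaurentPolynomial.C 2, ← map_mul]
  norm_num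

theorem half_mul_T_sq (n : ℤ) :
    (LaurentPolynomial.C (1/2 : ℂ) * T n) ^ 2 = LaurentPolynomial.C (1/4 : ℂ) * T (2 * n) := by
  rw [mul_pow, ← map_pow, T_pow]
  norm_num

theorem stmt19 :
    PsiL (X 0 ^ 2 * X 1 + X 2 ^ 2 + X 0 + MvPolynomial.C (T 3)) =
      (1 - X 0 * X 1 * MvPolynomial.C (T (-3))) * (X 0 * X 1 + X 2 ^ 2 + X 0 + MvPolynomial.C (T 3)) := by
  have hs : (MvPolynomial.C (T (-3)) * MvPolynomial.C (T 3) :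
      MvPolynomial (Fin 4) (LaurentPolynomial ℂ)) = 1 := by
    rw [← map_mul, T_neg_mul_T, map_one]
  have hc : (2 * MvPolynomial.C (LaurentPolynomial.C (1/2 : ℂ) * T (-3)) :
      MvPolynomial (Fin 4) (LaurentPolynomial ℂ)) = MvPolynomial.C (T (-3)) := by
    rw [← map_ofNat MvPolynomial.C 2, ← map_mul, two_mul_half_mul_T]
  have hc_sq : (MvPolynomial.C (LaurentPolynomial.C (1/4 : ℂ) * T (-6)) :
      MvPolynomial (Fin 4) (LaurentPolynomial ℂ)) =
        MvPolynomial.C (LaurentPolynomial.C (1/2 : ℂ) * T (-3)) ^ 2 := by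
    rw [← map_pow, half_mul_T_sq]
    norm_num
  simp only [PsiL, map_add, map_mul, map_pow, aeval_X, aeval_C, algebraMap_eq,
    Matrix.cons_val_zero, Matrix.cons_val_one, Matrix.cons_val_two, Matrix.head_cons,
    Matrix.tail_cons]
  simp only [map_mul] at hc hc_sq
  rw [hc_sq]
  exact koras_russell_substitution_identity hs hc
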